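/- arXiv:2604.13606 — 2 statements merged into one kernel-verified Lean document; each statement's English description precedes it below -/
import Mathlib

section
/- Let Δ, d, k be positive integers with (d+1)k ≥ Δ + 1, and let G be an n-vertex graph with maximum degree at most Δ. Suppose that G has no equitable d-degenerate k-colouring but has a minimal near-equitable d-degenerate k-colouring φ. Then every accessible colour class V of φ satisfies |V| − |C_-| ≤ 1 (equivalently |V| ≤ |C_1| + 1) and V* ≠ ∅, i.e. G[V] is not (d−1)-degenerate. -/
open Finset

attribute [local instance] Classical.propDecidable

variable {V : Type*} [Fintype V] [DecidableEq V]

/-- The subgraph of `G` induced on the vertex set `S` is `d`-degenerate: every nonempty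
subset of `S` contains a vertex having at most `d` neighbours inside that subset. -/
def DegenOn (G : SimpleGraph V) (d : ℕ) (S : Finset V) : Prop :=
  ∀ s : Finset V, s ⊆ S → s.Nonempty → ∃ v ∈ s, (s.filter (fun u => G.Adj v u)).card ≤ d

/-- The colour class of colour `i` under the colouring `f`. -/
def cls {k : ℕ} (f : V → Fin k) (i : Fin k) : Finset V :=
  Finset.univ.filter (fun v => f v = i)

/-- `f` is a `d`-degenerate `k`-colouring of `G`: each colour class induces a
`d`-degenerate subgraph. -/
def IsDegenColoring (G : SimpleGraph V) (d : ℕ) {k : ℕ} (f : V → Fin k) : Prop :=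
  ∀ i, DegenOn G d (cls f i)

/-- `f` is an equitable colouring: any two colour classes differ in size by at most one. -/
def IsEquitable {k : ℕ} (f : V → Fin k) : Prop :=
  ∀ i j, (cls f i).card ≤ (cls f j).card + 1

/-- `f` is a near-equitable `k`-colouring of an `n`-vertex graph (conditions (E1),(E2)):
with the colour classes sorted by size, `⌊n/k⌋ − 1 ≤ |C_1| ≤ ⌊n/k⌋ ≤ |C_2| ≤ … ≤
|C_{k−1}| ≤ ⌈n/k⌉ ≤ |C_k| ≤ ⌈n/k⌉ + 1`, and `2 ≤ |C_k| − |C_1| ≤ 3`.  Stated label-free: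
all class sizes lie in `[⌊n/k⌋ − 1, ⌈n/k⌉ + 1]`, at most one class is smaller than
`⌊n/k⌋`, at most one class is larger than `⌈n/k⌉`, some class has size `≤ ⌊n/k⌋`, some
class has size `≥ ⌈n/k⌉`, and the largest class exceeds the smallest by at least `2` and
at most `3`.  (Here `⌈n/k⌉ = (n + k - 1) / k` in natural division.) -/
def NearEquitable (n : ℕ) {k : ℕ} (f : V → Fin k) : Prop :=
  (∀ i, n / k - 1 ≤ (cls f i).card ∧ (cls f i).card ≤ (n + k - 1) / k + 1) ∧
  (Finset.univ.filter (fun i => (cls f i).card < n / k)).card ≤ 1 ∧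
  (Finset.univ.filter (fun i => (n + k - 1) / k < (cls f i).card)).card ≤ 1 ∧
  (∃ i, (cls f i).card ≤ n / k) ∧
  (∃ i, (n + k - 1) / k ≤ (cls f i).card) ∧
  (∃ i j, (cls f i).card + 2 ≤ (cls f j).card) ∧
  (∀ i j, (cls f j).card ≤ (cls f i).card + 3)

/-- The vertex `v` is movable to the colour class of colour `j`: `v` has a different
colour, and adding `v` to that class keeps it `d`-degenerate. -/
def Movable (G : SimpleGraph V) (d : ℕ) {k : ℕ} (f : V → Fin k) (v : V) (j : Fin k) :
    Prop :=
  f v ≠ j ∧ DegenOn G d (insert v (cls f j))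

/-- Arc of the auxiliary digraph `D`: there is an arc from colour `i` to colour `j`
(`i ≠ j`) iff some vertex of class `i` is movable to class `j`. -/
def MvArc (G : SimpleGraph V) (d : ℕ) {k : ℕ} (f : V → Fin k) (i j : Fin k) : Prop :=
  i ≠ j ∧ ∃ v, f v = i ∧ Movable G d f v j

/-- Class `i` is accessible to class `j`: `D` has a (possibly trivial) directed path from
`i` to `j`. -/
def AccTo (G : SimpleGraph V) (d : ℕ) {k : ℕ} (f : V → Fin k) : Fin k → Fin k → Prop :=
  Relation.ReflTransGen (MvArc G d f)

/-- Accessibility within the subdigraph of `D` induced on the set `S` of colours. -/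
def AccToWithin (G : SimpleGraph V) (d : ℕ) {k : ℕ} (f : V → Fin k)
    (S : Finset (Fin k)) : Fin k → Fin k → Prop :=
  Relation.ReflTransGen (fun i j => i ∈ S ∧ j ∈ S ∧ MvArc G d f i j)

/-- Class `i` has minimum size among all colour classes. -/
def IsMinClass {k : ℕ} (f : V → Fin k) (i : Fin k) : Prop :=
  ∀ j, (cls f i).card ≤ (cls f j).card

/-- Class `i` is accessible: it is accessible to some colour class of minimum size. -/
def Accessible (G : SimpleGraph V) (d : ℕ) {k : ℕ} (f : V → Fin k) (i : Fin k) : Prop :=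
  ∃ j, IsMinClass f j ∧ AccTo G d f i j

/-- `𝒜`: the set of accessible colours. -/
noncomputable def Aset (G : SimpleGraph V) (d : ℕ) {k : ℕ} (f : V → Fin k) :
    Finset (Fin k) :=
  Finset.univ.filter (fun i => Accessible G d f i)

/-- `ℬ`: the set of non-accessible colours. -/
noncomputable def Bset (G : SimpleGraph V) (d : ℕ) {k : ℕ} (f : V → Fin k) :
    Finset (Fin k) :=
  Finset.univ.filter (fun i => ¬ Accessible G d f i)

/-- `A`: the union of the accessible colour classes. -/
noncomputable def Averts (G : SimpleGraph V) (d : ℕ) {k : ℕ} (f : V → Fin k) : Finset V :=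
  Finset.univ.filter (fun v => Accessible G d f (f v))

/-- `B`: the union of the non-accessible colour classes. -/
noncomputable def Bverts (G : SimpleGraph V) (d : ℕ) {k : ℕ} (f : V → Fin k) : Finset V :=
  Finset.univ.filter (fun v => ¬ Accessible G d f (f v))

/-- The colours used by the subdigraphs `D_1, …, D_{i-1}` preceding `D_i`. -/
def UsedBefore {k q : ℕ} (𝒟 : Fin q → Finset (Fin k)) (i : Fin q) : Finset (Fin k) :=
  (Finset.univ.filter (fun i' => i' < i)).biUnion 𝒟

/-- `(𝒟, trm)` is the decomposition `D_1, …, D_q` of `𝒜` with terminals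
`trm 1, …, trm q`: at each step `i`, `trm i` is the smallest-index minimum-size colour
class not yet used (here "smallest index" is the smallest colour, the classes being
labelled in non-decreasing order of size), `D_i` consists of the unused accessible classes
accessible to `trm i`, the process exhausts all minimum-size classes, and every accessible
class belongs to some `D_i`. -/
def IsDecomp (G : SimpleGraph V) (d : ℕ) {k : ℕ} (f : V → Fin k) {q : ℕ}
    (𝒟 : Fin q → Finset (Fin k)) (trm : Fin q → Fin k) : Prop :=
  (∀ i : Fin q,
      IsMinClass f (trm i) ∧
      trm i ∉ UsedBefore 𝒟 i ∧
      (∀ j, IsMinClass f j → j ∉ UsedBefore 𝒟 i → trm i ≤ j) ∧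
      (∀ u, u ∈ 𝒟 i ↔
        Accessible G d f u ∧ u ∉ UsedBefore 𝒟 i ∧ AccTo G d f u (trm i))) ∧
  (∀ j, IsMinClass f j → ∃ i, j ∈ 𝒟 i) ∧
  (∀ u, Accessible G d f u → ∃ i, u ∈ 𝒟 i)

/-- `𝒯` for the choice `U` of removed class: the classes of `D_- − U` (here `Dl` is the
vertex set of `D_-` and `Cm` its terminal `C_-`) that are non-accessible to `C_-` in
`D_- − U`. -/
noncomputable def TSet (G : SimpleGraph V) (d : ℕ) {k : ℕ} (f : V → Fin k)
    (Dl : Finset (Fin k)) (Cm U : Fin k) : Finset (Fin k) :=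
  (Dl.erase U).filter (fun W => ¬ AccToWithin G d f (Dl.erase U) W Cm)

/-- `U` is a valid choice of `U_-`: it belongs to `D_-` and minimises the number of
classes of `D_- − U` that are non-accessible to `C_-` there. -/
def IsUminus (G : SimpleGraph V) (d : ℕ) {k : ℕ} (f : V → Fin k)
    (Dl : Finset (Fin k)) (Cm U : Fin k) : Prop :=
  U ∈ Dl ∧ ∀ U' ∈ Dl, (TSet G d f Dl Cm U).card ≤ (TSet G d f Dl Cm U').card

/-- `e` is a degeneracy ordering of the induced subgraph `G[S]` for the parameter `d`. -/
def IsDegOrdOn (G : SimpleGraph V) (d : ℕ) (S : Finset V)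
    (e : Fin S.card ≃ {x // x ∈ S}) : Prop :=
  ∀ i, (Finset.univ.filter (fun j => j < i ∧ G.Adj (e i : V) (e j : V))).card ≤ d

/-- The parameter `p` of a degeneracy ordering of `G[S]`: the largest (1-based) index
whose vertex has exactly `d` earlier neighbours (`0` if none). -/
noncomputable def ordPOn (G : SimpleGraph V) (d : ℕ) (S : Finset V)
    (e : Fin S.card ≃ {x // x ∈ S}) : ℕ :=
  (Finset.univ.filter (fun i =>
    (Finset.univ.filter (fun j => j < i ∧ G.Adj (e i : V) (e j : V))).card = d)).sup
      (fun i => (i : ℕ) + 1)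

/-- `p(G[S])`: the minimum of `ordPOn` over all degeneracy orderings of `G[S]`. -/
noncomputable def pMinOn (G : SimpleGraph V) (d : ℕ) (S : Finset V) : ℕ :=
  sInf {p | ∃ e : Fin S.card ≃ {x // x ∈ S}, IsDegOrdOn G d S e ∧ ordPOn G d S e = p}

/-- `V*` of the ordering `e` of `G[S]`: the set of its first `ordPOn G d S e` vertices. -/
noncomputable def VstarOf (G : SimpleGraph V) (d : ℕ) (S : Finset V)
    (e : Fin S.card ≃ {x // x ∈ S}) : Finset V :=
  (Finset.univ.filter (fun i : Fin S.card => (i : ℕ) < ordPOn G d S e)).image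
    (fun i => (e i : V))

/-- The size of the largest colour class, `|C_k|`. -/
def maxS {k : ℕ} (f : V → Fin k) : ℕ := Finset.univ.sup (fun i => (cls f i).card)

/-- The size of the smallest colour class, `|C_1|`. -/
noncomputable def minS {k : ℕ} (f : V → Fin k) : ℕ := sInf {m | ∃ i, (cls f i).card = m}

/-- `Σ_{V ∈ 𝒯} |V*| = Σ_{V ∈ 𝒯} p(G[V])`. -/
noncomputable def sumT (G : SimpleGraph V) (d : ℕ) {k : ℕ} (f : V → Fin k)
    (𝒯 : Finset (Fin k)) : ℕ :=
  ∑ i ∈ 𝒯, pMinOn G d (cls f i)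

/-- Lexicographic comparison of triples of naturals. -/
def Lex3Le (x y : ℕ × ℕ × ℕ) : Prop :=
  x.1 < y.1 ∨ (x.1 = y.1 ∧ (x.2.1 < y.2.1 ∨ (x.2.1 = y.2.1 ∧ x.2.2 ≤ y.2.2)))

/-- The triple `(|C_k| − |C_1|, b, Σ_{V ∈ 𝒯} |V*|)` associated with a colouring `f` and a
choice `𝒯` of the set of classes `𝒯`. -/
noncomputable def tripleOf (G : SimpleGraph V) (d : ℕ) {k : ℕ} (f : V → Fin k)
    (𝒯 : Finset (Fin k)) : ℕ × ℕ × ℕ :=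
  (maxS f - minS f, (Bset G d f).card, sumT G d f 𝒯)

/-- The near-equitable `d`-degenerate colouring `f` (with its associated set `𝒯f`) is
minimal: its triple `(|C_k| − |C_1|, b, Σ_{V ∈ 𝒯} |V*|)` is lexicographically smallest
among all near-equitable `d`-degenerate `k`-colourings of `G` with their associated
choices of decomposition and `U_-`. -/
def MinimalNE (G : SimpleGraph V) (d : ℕ) {k : ℕ} (f : V → Fin k)
    (𝒯f : Finset (Fin k)) : Prop :=
  ∀ g : V → Fin k, IsDegenColoring G d g → NearEquitable (Fintype.card V) g →
    ∀ (q : ℕ) (hq : 0 < q) (𝒟 : Fin q → Finset (Fin k)) (trm : Fin q → Fin k),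
      IsDecomp G d g 𝒟 trm →
      ∀ U : Fin k,
        IsUminus G d g (𝒟 ⟨q - 1, by omega⟩) (trm ⟨q - 1, by omega⟩) U →
        Lex3Le (tripleOf G d f 𝒯f)
          (tripleOf G d g (TSet G d g (𝒟 ⟨q - 1, by omega⟩) (trm ⟨q - 1, by omega⟩) U))

/-- `G[S]` has an equitable `d`-degenerate `m`-colouring. -/
def HasEqDegenColOn (G : SimpleGraph V) (d : ℕ) (S : Finset V) (m : ℕ) : Prop :=
  ∃ g : V → Fin m,
    (∀ i, DegenOn G d (S.filter (fun v => g v = i))) ∧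
    (∀ i j, (S.filter (fun v => g v = i)).card ≤ (S.filter (fun v => g v = j)).card + 1)

/-!
If an accessible class were at least two larger than a minimum class `C`, shifting one vertex
along each arc of a path from it to `C` that visits no class twice would give a `d`-degenerate
colouring which is either equitable, or near-equitable with `|C_k| − |C_1|` dropping from `3`
to `2`; both contradict the assumptions. If moreover `G[V]` were `(d−1)`-degenerate for an
accessible class `V`, every vertex would be movable to `V`, so a class at least two larger than
`C_-` (there is one, by near-equitability) would be accessible, which we have just excluded.
-/

theorem Relation.ReflTransGen.eq_or_head_of_restrict {α : Type*} [DecidableEq α]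
    {r : α → α → Prop} {S : Finset α} {a b : α}
    (h : Relation.ReflTransGen (fun x y => x ∈ S ∧ y ∈ S ∧ r x y) a b) :
    a = b ∨ a ∈ S ∧ ∃ c, r a c ∧ c ∈ S ∧
      Relation.ReflTransGen (fun x y => x ∈ S.erase a ∧ y ∈ S.erase a ∧ r x y) c b := by
  induction h with
  | refl => exact Or.inl rfl
  | @tail y z _ hyz ih =>
    obtain ⟨hyS, hzS, hryz⟩ := hyz
    rcases ih with rfl | ⟨haS, c, hac, hcS, hcy⟩
    · exact Or.inr ⟨hyS, z, hryz, hzS, .refl⟩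
    by_cases hza : z = a
    · exact Or.inl hza.symm
    by_cases hya : y = a
    · subst hya
      exact Or.inr ⟨haS, z, hryz, hzS, .refl⟩
    exact Or.inr ⟨haS, c, hac, hcS,
      hcy.tail ⟨mem_erase.2 ⟨hya, hyS⟩, mem_erase.2 ⟨hza, hzS⟩, hryz⟩⟩

section Degeneracy

variable {W : Type*} {G : SimpleGraph W} {d : ℕ}

theorem DegenOn.mono {S T : Finset W} (h : DegenOn G d T) (hST : S ⊆ T) : DegenOn G d S :=
  fun s hs hne => h s (hs.trans hST) hne

theorem DegenOn.insert_of_pred [DecidableEq W] (hd : 0 < d) {S : Finset W}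
    (h : DegenOn G (d - 1) S) (v : W) :
    DegenOn G d (insert v S) := by
  intro s hs hne
  by_cases hrest : (s.erase v).Nonempty
  · obtain ⟨u, hu, hdeg⟩ := h _ (subset_insert_iff.1 hs) hrest
    refine ⟨u, mem_of_mem_erase hu, ?_⟩
    have := pred_card_le_card_erase (s := s.filter fun x => G.Adj u x) (a := v)
    rw [← filter_erase] at this
    omega
  · obtain rfl : s = {v} := by
      rw [not_nonempty_iff_eq_empty, erase_eq_empty_iff] at hrest
      exact hrest.resolve_left hne.ne_empty
    exact ⟨v, mem_singleton_self v, by simp [filter_singleton]⟩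

end Degeneracy

section Colourings

variable {W : Type*} [Fintype W] {G : SimpleGraph W} {d k : ℕ}

@[simp]
theorem mem_cls {f : W → Fin k} {v : W} {i : Fin k} : v ∈ cls f i ↔ f v = i := by
  simp [cls]

theorem cls_update_self [DecidableEq W] (f : W → Fin k) (v : W) (j : Fin k) :
    cls (Function.update f v j) j = insert v (cls f j) := by
  ext u
  by_cases h : u = v <;> simp [h]

theorem cls_update_of_ne [DecidableEq W] (f : W → Fin k) (v : W) {i j : Fin k} (hij : i ≠ j) :
    cls (Function.update f v j) i = (cls f i).erase v := by
  ext u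
  by_cases h : u = v <;> simp [h, Ne.symm hij]

theorem IsDegenColoring.update [DecidableEq W] {f : W → Fin k} (hf : IsDegenColoring G d f)
    {v : W} {j : Fin k} (hmov : Movable G d f v j) :
    IsDegenColoring G d (Function.update f v j) := by
  intro i
  by_cases hij : i = j
  · subst hij
    rw [cls_update_self]
    exact hmov.2
  · rw [cls_update_of_ne f v hij]
    exact (hf i).mono (erase_subset _ _)

/-- The class sizes of `g` are those of `f` with one unit moved from class `w` to class `z`
(no change at all if `w = z`). -/
def ShiftsCard (f g : W → Fin k) (w z : Fin k) : Prop :=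
  ∀ j, (cls g j).card + (if j = w then 1 else 0) = (cls f j).card + (if j = z then 1 else 0)

theorem shiftsCard_update [DecidableEq W] {f : W → Fin k} {v : W} {j : Fin k}
    (hvj : f v ≠ j) : ShiftsCard f (Function.update f v j) (f v) j := by
  intro i
  by_cases hij : i = j
  · subst hij
    rw [cls_update_self, card_insert_of_notMem (by simpa using hvj), if_neg (Ne.symm hvj),
      if_pos rfl]
  · rw [cls_update_of_ne f v hij, if_neg hij]
    split_ifs with hiv
    · exact card_erase_add_one (by simp [hiv])
    · rw [erase_eq_of_notMem (by simpa using Ne.symm hiv)]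

theorem ShiftsCard.trans {f g h : W → Fin k} {u w z : Fin k} (hfg : ShiftsCard f g w z)
    (hgh : ShiftsCard g h u w) : ShiftsCard f h u z := by
  intro j
  have h1 := hfg j
  have h2 := hgh j
  omega

/-- The path is first made to avoid its starting class `w` (`S` shrinks to `S.erase w`), so that
the vertex to be moved out of `w` is still there once the rest of the path has been processed. -/
theorem exists_shiftsCard_of_accToWithin [DecidableEq W] {f : W → Fin k}
    (hf : IsDegenColoring G d f) {S : Finset (Fin k)} {w z : Fin k} (h : AccToWithin G d f S w z) :
    ∃ g, IsDegenColoring G d g ∧ ShiftsCard f g w z ∧ cls g w ⊆ cls f w ∧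
      ∀ j ∉ S, cls g j = cls f j := by
  induction S using Finset.strongInduction generalizing w with
  | H S ih =>
  rcases Relation.ReflTransGen.eq_or_head_of_restrict h with
    rfl | ⟨hwS, w', ⟨hww', v, rfl, hvw'⟩, hw'S, hpath⟩
  · exact ⟨f, hf, fun _ => rfl, subset_rfl, fun _ _ => rfl⟩
  obtain ⟨g, hg, hfg, hsub, hout⟩ := ih _ (erase_ssubset hwS) hpath
  have hgw : cls g (f v) = cls f (f v) := hout _ (notMem_erase _ _)
  have hgv : g v = f v := mem_cls.1 (hgw ▸ mem_cls.2 rfl)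
  have hmov : Movable G d g v w' :=
    ⟨hgv ▸ hww', hvw'.2.mono (insert_subset_insert _ hsub)⟩
  refine ⟨_, hg.update hmov, hfg.trans (hgv ▸ shiftsCard_update (hgv ▸ hww')), ?_, ?_⟩
  · rw [cls_update_of_ne g v hww', ← hgw]
    exact erase_subset _ _
  · intro j hj
    have hjw : j ≠ f v := fun h => hj (by rwa [h])
    rw [cls_update_of_ne g v (fun h => hj (by rwa [h])),
      erase_eq_of_notMem (by simpa [hgv] using Ne.symm hjw),
      hout j (fun h => hj (mem_of_mem_erase h))]

theorem exists_shiftsCard_of_accTo [DecidableEq W] {f : W → Fin k}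
    (hf : IsDegenColoring G d f) {w z : Fin k} (h : AccTo G d f w z) :
    ∃ g, IsDegenColoring G d g ∧ ShiftsCard f g w z := by
  obtain ⟨g, hg, hfg, -⟩ := exists_shiftsCard_of_accToWithin (S := univ) hf
    (Relation.ReflTransGen.mono (fun _ _ hab => ⟨mem_univ _, mem_univ _, hab⟩) _ _ h)
  exact ⟨g, hg, hfg⟩

theorem mvArc_of_degenOn_pred [DecidableEq W] (hd : 0 < d) {f : W → Fin k} {i j : Fin k}
    (hi : DegenOn G (d - 1) (cls f i)) (hji : j ≠ i) (hj : (cls f j).Nonempty) :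
    MvArc G d f j i := by
  obtain ⟨v, hv⟩ := hj
  rw [mem_cls] at hv
  exact ⟨hji, v, hv, hv ▸ hji, hi.insert_of_pred hd v⟩

end Colourings

section Decomposition

noncomputable def firstHit {α β : Type*} [Fintype α] {q : ℕ} (R : α → β → Prop)
    (t : Fin q → β) (i : Fin q) : Finset α :=
  univ.filter fun u => R u (t i) ∧ ∀ i' < i, ¬ R u (t i')

theorem exists_mem_firstHit_le {α β : Type*} [Fintype α] {q : ℕ} {R : α → β → Prop}
    {t : Fin q → β} {u : α} {i : Fin q} (h : R u (t i)) : ∃ i' ≤ i, u ∈ firstHit R t i' := by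
  obtain ⟨i', hi', hmin⟩ := wellFounded_lt.has_min {i' | R u (t i')} ⟨i, h⟩
  exact ⟨i', not_lt.1 (hmin i h),
    mem_filter.2 ⟨mem_univ _, hi', fun i'' hi'' h'' => hmin i'' h'' hi''⟩⟩

theorem mem_usedBefore_firstHit {β : Type*} {k q : ℕ} {R : Fin k → β → Prop} {t : Fin q → β}
    {u : Fin k} {i : Fin q} : u ∈ UsedBefore (firstHit R t) i ↔ ∃ i' < i, R u (t i') := by
  simp only [UsedBefore, mem_biUnion, mem_filter, mem_univ, true_and]
  constructor
  · rintro ⟨i', hi', hmem⟩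
    exact ⟨i', hi', (mem_filter.1 hmem).2.1⟩
  · rintro ⟨i', hi', hu⟩
    obtain ⟨i'', hi'', hmem⟩ := exists_mem_firstHit_le hu
    exact ⟨i'', hi''.trans_lt hi', hmem⟩

variable {W : Type*} [Fintype W] [DecidableEq W] {G : SimpleGraph W} {d k : ℕ}

/-- The terminals `C_{j_1}, C_{j_2}, …` of the decomposition of `𝒜` are exactly the minimum
classes not accessible to a minimum class of smaller index. -/
def IsTerminal (G : SimpleGraph W) (d : ℕ) (f : W → Fin k) (j : Fin k) : Prop :=
  IsMinClass f j ∧ ∀ t < j, IsMinClass f t → ¬ AccTo G d f j t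

theorem exists_isTerminal_le_accTo {f : W → Fin k} {j : Fin k} (hj : IsMinClass f j) :
    ∃ t, IsTerminal G d f t ∧ t ≤ j ∧ AccTo G d f j t := by
  induction j using WellFoundedLT.induction with
  | _ j ih =>
  by_cases hterm : IsTerminal G d f j
  · exact ⟨j, hterm, le_rfl, .refl⟩
  obtain ⟨s, hsj, hs, hjs⟩ : ∃ s < j, IsMinClass f s ∧ AccTo G d f j s := by
    simpa [IsTerminal, hj] using hterm
  obtain ⟨t, ht, hts, hst⟩ := ih s hsj hs
  exact ⟨t, ht, hts.trans hsj.le, hjs.trans hst⟩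

noncomputable def terminals (G : SimpleGraph W) (d : ℕ) (f : W → Fin k) : Finset (Fin k) :=
  univ.filter (IsTerminal G d f)

theorem isDecomp_firstHit_terminals (f : W → Fin k) :
    IsDecomp G d f (firstHit (AccTo G d f) ((terminals G d f).orderEmbOfFin rfl))
      ((terminals G d f).orderEmbOfFin rfl) := by
  set trm := (terminals G d f).orderEmbOfFin rfl
  have hterm (i) : IsTerminal G d f (trm i) := (mem_filter.1 (orderEmbOfFin_mem _ rfl i)).2
  have htrm {t} (ht : IsTerminal G d f t) : ∃ i, trm i = t := by
    rw [← Set.mem_range, range_orderEmbOfFin]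
    exact mem_filter.2 ⟨mem_univ _, ht⟩
  have hcover {u} (hu : Accessible G d f u) : ∃ i, u ∈ firstHit (AccTo G d f) trm i := by
    obtain ⟨j, hj, huj⟩ := hu
    obtain ⟨t, ht, -, hjt⟩ := exists_isTerminal_le_accTo (G := G) (d := d) hj
    obtain ⟨i, rfl⟩ := htrm ht
    obtain ⟨i', -, hmem⟩ := exists_mem_firstHit_le (huj.trans hjt)
    exact ⟨i', hmem⟩
  refine ⟨fun i => ⟨(hterm i).1, ?_, ?_, fun u => ?_⟩, fun j hj => hcover ⟨j, hj, .refl⟩,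
    fun u hu => hcover hu⟩
  · rw [mem_usedBefore_firstHit]
    rintro ⟨i', hi', hacc⟩
    exact (hterm i).2 _ (trm.lt_iff_lt.2 hi') (hterm i').1 hacc
  · intro j hj hjnot
    by_contra! hji
    obtain ⟨t, ht, htj, hjt⟩ := exists_isTerminal_le_accTo (G := G) (d := d) hj
    obtain ⟨i', rfl⟩ := htrm ht
    exact hjnot (mem_usedBefore_firstHit.2 ⟨i', trm.lt_iff_lt.1 (htj.trans_lt hji), hjt⟩)
  · simp only [firstHit, mem_filter, mem_univ, true_and, mem_usedBefore_firstHit, not_exists,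
      not_and]
    exact ⟨fun ⟨hu, hfirst⟩ => ⟨⟨_, (hterm i).1, hu⟩, hfirst, hu⟩,
      fun ⟨_, hfirst, hu⟩ => ⟨hu, hfirst⟩⟩

theorem IsDecomp.mem {f : W → Fin k} {q : ℕ} {𝒟 : Fin q → Finset (Fin k)}
    {trm : Fin q → Fin k} (h : IsDecomp G d f 𝒟 trm) (i : Fin q) : trm i ∈ 𝒟 i :=
  ((h.1 i).2.2.2 _).2 ⟨⟨_, (h.1 i).1, .refl⟩, (h.1 i).2.1, .refl⟩

theorem exists_isUminus {f : W → Fin k} {Dl : Finset (Fin k)} (hDl : Dl.Nonempty)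
    (Cm : Fin k) : ∃ U, IsUminus G d f Dl Cm U := by
  obtain ⟨U, hU, hmin⟩ := exists_min_image Dl (fun U => (TSet G d f Dl Cm U).card) hDl
  exact ⟨U, hU, hmin⟩

theorem terminals_nonempty (hk : 0 < k) (f : W → Fin k) : (terminals G d f).Nonempty := by
  obtain ⟨j, -, hj⟩ := exists_min_image univ (fun j => (cls f j).card) ⟨⟨0, hk⟩, mem_univ _⟩
  obtain ⟨t, ht, -⟩ := exists_isTerminal_le_accTo (G := G) (d := d) (fun i => hj i (mem_univ i))
  exact ⟨t, mem_filter.2 ⟨mem_univ _, ht⟩⟩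

theorem MinimalNE.spread_le (hk : 0 < k) {f g : W → Fin k} {Tf : Finset (Fin k)}
    (hmin : MinimalNE G d f Tf) (hg : IsDegenColoring G d g)
    (hgne : NearEquitable (Fintype.card W) g) : maxS f - minS f ≤ maxS g - minS g := by
  have hq := card_pos.2 (terminals_nonempty (G := G) (d := d) hk g)
  have hdec := isDecomp_firstHit_terminals (G := G) (d := d) g
  obtain ⟨U, hU⟩ := exists_isUminus (G := G) (d := d) (f := g)
    ⟨_, hdec.mem ⟨_, Nat.sub_one_lt_of_lt hq⟩⟩ _
  have := hmin g hg hgne _ hq _ _ hdec U hU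
  simp only [Lex3Le, tripleOf] at this
  omega

end Decomposition

section Sizes

variable {W : Type*} [Fintype W] {k : ℕ}

theorem card_cls_le_maxS (f : W → Fin k) (j : Fin k) : (cls f j).card ≤ maxS f :=
  le_sup (f := fun i => (cls f i).card) (mem_univ j)

theorem minS_le_card_cls (f : W → Fin k) (j : Fin k) : minS f ≤ (cls f j).card :=
  Nat.sInf_le ⟨j, rfl⟩

theorem maxS_le {f : W → Fin k} {b : ℕ} (h : ∀ j, (cls f j).card ≤ b) : maxS f ≤ b :=
  Finset.sup_le fun j _ => h j

theorem le_minS (hk : 0 < k) {f : W → Fin k} {a : ℕ} (h : ∀ j, a ≤ (cls f j).card) :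
    a ≤ minS f := by
  obtain ⟨j, hj⟩ := Nat.sInf_mem (⟨_, ⟨0, hk⟩, rfl⟩ : {m | ∃ i, (cls f i).card = m}.Nonempty)
  rw [minS, ← hj]
  exact h j

theorem ceil_div_le_floor_div_add_one (n k : ℕ) : (n + k - 1) / k ≤ n / k + 1 := by
  rcases Nat.eq_zero_or_pos k with rfl | hk
  · simp
  · calc (n + k - 1) / k ≤ (n + k) / k := Nat.div_le_div_right (by omega)
      _ = n / k + 1 := Nat.add_div_right n hk

theorem floor_div_le_ceil_div (n : ℕ) {k : ℕ} (hk : 0 < k) : n / k ≤ (n + k - 1) / k :=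
  Nat.div_le_div_right (by omega)

theorem nearEquitable_of_bounds {n : ℕ} {g : W → Fin k}
    (hlo : ∀ j, n / k ≤ (cls g j).card) (hhi : ∀ j, (cls g j).card ≤ (n + k - 1) / k + 1)
    (hbig : (univ.filter fun j => (n + k - 1) / k < (cls g j).card).card ≤ 1)
    {i₀ j₀ : Fin k} (hspread : (cls g j₀).card + 2 ≤ (cls g i₀).card) : NearEquitable n g := by
  have hUL := ceil_div_le_floor_div_add_one n k
  have hi₀ := hhi i₀
  have hj₀ := hlo j₀
  refine ⟨fun j => ⟨(Nat.sub_le _ _).trans (hlo j), hhi j⟩, ?_, hbig, ⟨j₀, by omega⟩,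
    ⟨i₀, by omega⟩, ⟨j₀, i₀, hspread⟩, fun i j => by have := hlo i; have := hhi j; omega⟩
  exact card_le_one.2 fun a ha => absurd (hlo a) (not_le.2 (mem_filter.1 ha).2)

end Sizes

section Shift

variable {W : Type*} [Fintype W] {k : ℕ}

theorem ShiftsCard.card_cls {f g : W → Fin k} {w z : Fin k} (h : ShiftsCard f g w z)
    (hwz : w ≠ z) :
    (cls g w).card + 1 = (cls f w).card ∧ (cls g z).card = (cls f z).card + 1 ∧
      ∀ j, j ≠ w → j ≠ z → (cls g j).card = (cls f j).card :=
  ⟨by simpa [hwz] using h w, by simpa [hwz.symm] using h z,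
    fun j hjw hjz => by simpa [hjw, hjz] using h j⟩

variable {n : ℕ} {f g : W → Fin k} {z m : Fin k}

theorem ShiftsCard.bounds_of_nearEquitable (hne : NearEquitable n f) (hm : IsMinClass f m)
    (hz : (cls f m).card + 2 ≤ (cls f z).card) (hshift : ShiftsCard f g z m) :
    (∀ j, n / k ≤ (cls g j).card) ∧ (∀ j, (cls g j).card ≤ (n + k - 1) / k + 1) ∧
      (univ.filter fun j => (n + k - 1) / k < (cls g j).card) ⊆
        univ.filter fun j => (n + k - 1) / k < (cls f j).card := by
  obtain ⟨hbd, hsmall, -, ⟨i, hi⟩, -⟩ := hne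
  have hzm : z ≠ m := by rintro rfl; omega
  obtain ⟨hgz, hgm, hgj⟩ := hshift.card_cls hzm
  have hLU := floor_div_le_ceil_div n m.pos
  have hmL : (cls f m).card ≤ n / k := (hm i).trans hi
  have hLm : n / k ≤ (cls f m).card + 1 := by have := (hbd m).1; omega
  have hzU := (hbd z).2
  have hlarge : ∀ j ≠ m, n / k ≤ (cls f j).card := fun j hjm => by
    by_contra! hlt
    exact hjm (card_le_one.1 hsmall j (mem_filter.2 ⟨mem_univ _, hlt⟩) m
      (mem_filter.2 ⟨mem_univ _, (hm j).trans_lt hlt⟩))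
  have key : ∀ j, n / k ≤ (cls g j).card ∧ (cls g j).card ≤ (n + k - 1) / k + 1 ∧
      ((n + k - 1) / k < (cls g j).card → (n + k - 1) / k < (cls f j).card) := by
    intro j
    by_cases hjz : j = z
    · subst hjz; omega
    by_cases hjm : j = m
    · subst hjm; omega
    rw [hgj j hjz hjm]
    exact ⟨hlarge j hjm, (hbd j).2, id⟩
  refine ⟨fun j => (key j).1, fun j => (key j).2.1, fun j hj => ?_⟩
  simp only [mem_filter, mem_univ, true_and] at hj ⊢
  exact (key j).2.2 hj

/-- The shift is equitable unless a third class `i₀` of size `⌊n/k⌋ + 2` is present, in which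
case the minimum class had size `⌊n/k⌋ − 1` and the spread `|C_k| − |C_1|` drops from `3` to `2`. -/
theorem ShiftsCard.isEquitable_or (hne : NearEquitable n f) (hm : IsMinClass f m)
    (hz : (cls f m).card + 2 ≤ (cls f z).card) (hshift : ShiftsCard f g z m) :
    IsEquitable g ∨ NearEquitable n g ∧ maxS g - minS g < maxS f - minS f := by
  obtain ⟨hlo, hhi, hbig⟩ := hshift.bounds_of_nearEquitable hne hm hz
  rw [or_iff_not_imp_left]
  intro hneq
  obtain ⟨i₀, j₀, hspread⟩ : ∃ i₀ j₀, (cls g j₀).card + 1 < (cls g i₀).card := by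
    simpa [IsEquitable] using hneq
  have hzm : z ≠ m := by rintro rfl; omega
  obtain ⟨hgz, hgm, hgj⟩ := hshift.card_cls hzm
  obtain ⟨hbd, -, hbigf, ⟨i, hi⟩, -⟩ := hne
  have hUL := ceil_div_le_floor_div_add_one n k
  have hj₀ := hlo j₀
  have hi₀g := hhi i₀
  have hzU := (hbd z).2
  have hmL : (cls f m).card ≤ n / k := (hm i).trans hi
  have hLm := (hbd m).1
  have hi₀z : i₀ ≠ z := by rintro rfl; omega
  have hi₀m : i₀ ≠ m := by rintro rfl; omega
  have hi₀ : (cls f i₀).card = n / k + 2 := by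
    rw [← hgj i₀ hi₀z hi₀m]; omega
  have hmin : (cls f m).card + 1 = n / k := by
    by_contra
    have : z = i₀ := card_le_one.1 hbigf z (mem_filter.2 ⟨mem_univ _, by omega⟩) i₀
      (mem_filter.2 ⟨mem_univ _, by omega⟩)
    omega
  refine ⟨nearEquitable_of_bounds hlo hhi ((card_le_card hbig).trans hbigf) hspread, ?_⟩
  have := maxS_le fun j => (hhi j).trans (Nat.add_le_add_right hUL 1)
  have := le_minS m.pos hlo
  have := card_cls_le_maxS f i₀
  have := minS_le_card_cls f m
  omega

end Shift

theorem MinimalNE.card_le_of_accTo {W : Type*} [Fintype W] [DecidableEq W] {G : SimpleGraph W}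
    {d k : ℕ} {f : W → Fin k} {Tf : Finset (Fin k)} (hmin : MinimalNE G d f Tf)
    (hnoeq : ¬ ∃ g : W → Fin k, IsDegenColoring G d g ∧ IsEquitable g)
    (hf : IsDegenColoring G d f) (hne : NearEquitable (Fintype.card W) f) {z m : Fin k}
    (hm : IsMinClass f m) (hacc : AccTo G d f z m) : (cls f z).card ≤ (cls f m).card + 1 := by
  by_contra! hz
  obtain ⟨g, hg, hshift⟩ := exists_shiftsCard_of_accTo hf hacc
  rcases hshift.isEquitable_or hne hm hz with heq | ⟨hgne, hspread⟩
  · exact hnoeq ⟨g, hg, heq⟩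
  · exact (hmin.spread_le m.pos hg hgne).not_gt hspread

/-- **Lemma 2.4(a).**  Every accessible colour class `V` of the minimal near-equitable
`d`-degenerate `k`-colouring `f` satisfies `|V| − |C_-| ≤ 1` and `V* ≠ ∅`, i.e.
`G[V]` is not `(d−1)`-degenerate. -/
theorem accessible_class_size_and_Vstar_nonempty
    (d k : ℕ) (hd : 0 < d)
    (G : SimpleGraph V)
    (hnoeq : ¬ ∃ g : V → Fin k, IsDegenColoring G d g ∧ IsEquitable g)
    (f : V → Fin k) (hf : IsDegenColoring G d f)
    (hne : NearEquitable (Fintype.card V) f)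
    (q : ℕ) (hq : 0 < q) (𝒟 : Fin q → Finset (Fin k)) (trm : Fin q → Fin k)
    (hdec : IsDecomp G d f 𝒟 trm)
    (Cm : Fin k) (hCm : Cm = trm ⟨q - 1, by omega⟩)
    (Tf : Finset (Fin k))
    (hmin : MinimalNE G d f Tf) :
    ∀ i : Fin k, Accessible G d f i →
      (cls f i).card ≤ (cls f Cm).card + 1 ∧ ¬ DegenOn G (d - 1) (cls f i) := by
  rintro i ⟨m, hm, hacc⟩
  have hCm_min : IsMinClass f Cm := hCm ▸ (hdec.1 _).1
  have hmCm : (cls f m).card = (cls f Cm).card := le_antisymm (hm Cm) (hCm_min m)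
  have hi := hmin.card_le_of_accTo hnoeq hf hne hm hacc
  refine ⟨hmCm ▸ hi, fun hdegen => ?_⟩
  obtain ⟨a, b, hab⟩ := hne.2.2.2.2.2.1
  have hb : (cls f m).card + 2 ≤ (cls f b).card := by have := hm a; omega
  have harc := mvArc_of_degenOn_pred hd hdegen (j := b) (by rintro rfl; omega)
    (card_pos.1 (by omega))
  have := hmin.card_le_of_accTo hnoeq hf hne hm (.head harc hacc)
  omega
end

section
/- Let Δ, d, k be positive integers with (d+1)k ≥ Δ + 1, and let G be an n-vertex graph with maximum degree at most Δ. Suppose that G has no equitable d-degenerate k-colouring but has a minimal near-equitable d-degenerate k-colouring φ. Then for every V ∈ 𝒯, every vertex v ∈ V is non-movable to any colour class in 𝒜 ∖ (𝒯 ∪ {U_-}); in particular, v has at least (d+1)(a − 1 − t) neighbours in the union of the classes of 𝒜 ∖ (𝒯 ∪ {U_-}). -/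
open Finset

attribute [local instance] Classical.propDecidable

variable {V : Type*} [Fintype V] [DecidableEq V]

/-! A class `V ∈ 𝒯` has no path to `C_-` in `D_- − U_-`, so an arc leaving `V` towards a class of
`D_- − U_-` ends in `𝒯` again; and an arc from `V` (a class of the last subdigraph `D_-`) to an
accessible class of an earlier `D_i` would have put `V` itself into `D_i`. Hence no vertex of `V`
is movable to a class `W ∈ 𝒜 ∖ (𝒯 ∪ {U_-})`. Since `G[W]` is `d`-degenerate, a vertex with at
most `d` neighbours in `W` would be movable to `W`, so each such `W` holds at least `d + 1`
neighbours of `v`. -/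

theorem DegenOn.insert_of_card_adj_le {α : Type*} [DecidableEq α] {G : SimpleGraph α} {d : ℕ}
    {S : Finset α} {v : α} (hS : DegenOn G d S)
    (hv : (S.filter (fun u => G.Adj v u)).card ≤ d) : DegenOn G d (insert v S) := by
  intro s hs hne
  by_cases hvs : v ∈ s
  · refine ⟨v, hvs, le_trans (card_le_card fun u hu => ?_) hv⟩
    rw [mem_filter] at hu ⊢
    exact ⟨(mem_insert.1 (hs hu.1)).resolve_left (G.ne_of_adj hu.2).symm, hu.2⟩
  · refine hS s (fun u hu => (mem_insert.1 (hs hu)).resolve_left ?_) hne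
    rintro rfl
    exact hvs hu

theorem mul_card_le_card_adj_of_le {α : Type*} [Fintype α] {G : SimpleGraph α} {k : ℕ}
    (f : α → Fin k) (v : α) (S : Finset (Fin k)) (m : ℕ)
    (hS : ∀ j ∈ S, m ≤ ((cls f j).filter (fun u => G.Adj v u)).card) :
    m * S.card ≤ (univ.filter (fun u => G.Adj v u ∧ f u ∈ S)).card := by
  rw [card_eq_sum_card_fiberwise (f := f) (t := S) fun u hu => (mem_filter.1 hu).2.2,
    mul_comm, ← smul_eq_mul, ← sum_const]
  refine sum_le_sum fun j hj => (hS j hj).trans (card_le_card fun u hu => ?_)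
  simp only [cls, mem_filter, mem_univ, true_and] at hu ⊢
  exact ⟨⟨hu.2, hu.1 ▸ hj⟩, hu.1⟩

section

variable {G : SimpleGraph V} {d k q : ℕ} {f : V → Fin k} {𝒟 : Fin q → Finset (Fin k)}
  {trm : Fin q → Fin k}

theorem le_card_adj_of_not_movable (hf : IsDegenColoring G d f) {v : V}
    {j : Fin k} (hvj : f v ≠ j) (hmov : ¬ Movable G d f v j) :
    d + 1 ≤ ((cls f j).filter (fun u => G.Adj v u)).card := by
  by_contra! h
  exact hmov ⟨hvj, (hf j).insert_of_card_adj_le (Nat.lt_succ_iff.1 h)⟩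

theorem usedBefore_mono {l l' : Fin q} (h : l' ≤ l) : UsedBefore 𝒟 l' ⊆ UsedBefore 𝒟 l :=
  biUnion_subset_biUnion_of_subset_left _ fun x hx => by
    simp only [mem_filter, mem_univ, true_and] at hx ⊢
    exact hx.trans_le h

theorem mem_usedBefore_of_lt {l l' : Fin q} (h : l' < l) {i : Fin k} (hi : i ∈ 𝒟 l') :
    i ∈ UsedBefore 𝒟 l :=
  mem_biUnion.2 ⟨l', by simpa using h, hi⟩

theorem IsDecomp.accessible_of_mem (hdec : IsDecomp G d f 𝒟 trm) {l : Fin q} {i : Fin k}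
    (hi : i ∈ 𝒟 l) : Accessible G d f i :=
  (((hdec.1 l).2.2.2 i).1 hi).1

theorem IsDecomp.le_of_accTo (hdec : IsDecomp G d f 𝒟 trm) {l l' : Fin q} {i j : Fin k}
    (hi : i ∈ 𝒟 l) (hj : j ∈ 𝒟 l') (hij : AccTo G d f i j) : l ≤ l' := by
  by_contra! hlt
  obtain ⟨hiacc, hiused, -⟩ := ((hdec.1 l).2.2.2 i).1 hi
  obtain ⟨-, -, hjtrm⟩ := ((hdec.1 l').2.2.2 j).1 hj
  have hi' : i ∈ 𝒟 l' := ((hdec.1 l').2.2.2 i).2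
    ⟨hiacc, fun h => hiused (usedBefore_mono hlt.le h), hij.trans hjtrm⟩
  exact hiused (mem_usedBefore_of_lt hlt hi')

theorem IsDecomp.mem_last_of_accTo (hdec : IsDecomp G d f 𝒟 trm) (hq : 0 < q) {i j : Fin k}
    (hi : i ∈ 𝒟 ⟨q - 1, by omega⟩) (hj : Accessible G d f j) (hij : AccTo G d f i j) :
    j ∈ 𝒟 ⟨q - 1, by omega⟩ := by
  obtain ⟨l, hjl⟩ := hdec.2.2 j hj
  have hle := hdec.le_of_accTo hi hjl hij
  have hl : l = ⟨q - 1, by omega⟩ := Fin.ext <| show (l : ℕ) = q - 1 from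
    le_antisymm (Nat.le_sub_one_of_lt l.isLt) hle
  rwa [hl] at hjl

theorem TSet_subset_erase (Dl : Finset (Fin k)) (Cm U : Fin k) :
    TSet G d f Dl Cm U ⊆ Dl.erase U :=
  filter_subset _ _

theorem mem_TSet_of_mvArc {Dl : Finset (Fin k)} {Cm U i j : Fin k}
    (hi : i ∈ TSet G d f Dl Cm U) (hj : j ∈ Dl.erase U) (hij : MvArc G d f i j) :
    j ∈ TSet G d f Dl Cm U := by
  rw [TSet, mem_filter] at hi ⊢
  exact ⟨hj, fun hjC => hi.2 (.head ⟨hi.1, hj, hij⟩ hjC)⟩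

theorem not_movable_of_mem_TSet (hdec : IsDecomp G d f 𝒟 trm) (hq : 0 < q) {Cm U i j : Fin k}
    (hi : i ∈ TSet G d f (𝒟 ⟨q - 1, by omega⟩) Cm U) {v : V} (hv : f v = i)
    (hj : Accessible G d f j) (hjT : j ∉ TSet G d f (𝒟 ⟨q - 1, by omega⟩) Cm U)
    (hjU : j ≠ U) :
    ¬ Movable G d f v j := by
  intro hmov
  have harc : MvArc G d f i j := ⟨fun h => hjT (h ▸ hi), v, hv, hmov⟩
  have hiD := (mem_erase.1 (TSet_subset_erase _ _ _ hi)).2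
  have hjD := hdec.mem_last_of_accTo hq hiD hj (.single harc)
  exact hjT (mem_TSet_of_mvArc hi (mem_erase.2 ⟨hjU, hjD⟩) harc)

end

/-- **Lemma 2.4(c).**  For every `V ∈ 𝒯`, each vertex `v ∈ V` is non-movable to any
colour class in `𝒜 \ (𝒯 ∪ {U_-})`; in particular, `v` has at least
`(d+1)(a − 1 − t)` neighbours in the union of the classes of `𝒜 \ (𝒯 ∪ {U_-})`. -/
theorem T_vertices_nonmovable
    (d k : ℕ)
    (G : SimpleGraph V)
    (f : V → Fin k) (hf : IsDegenColoring G d f)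
    (q : ℕ) (hq : 0 < q) (𝒟 : Fin q → Finset (Fin k)) (trm : Fin q → Fin k)
    (hdec : IsDecomp G d f 𝒟 trm)
    (Dl : Finset (Fin k)) (hDl : Dl = 𝒟 ⟨q - 1, by omega⟩)
    (Cm : Fin k) (hCm : Cm = trm ⟨q - 1, by omega⟩)
    (Um : Fin k) (hUm : IsUminus G d f Dl Cm Um)
    (Tf : Finset (Fin k)) (hTf : Tf = TSet G d f Dl Cm Um) :
    ∀ i ∈ Tf, ∀ v : V, f v = i →
      (∀ j : Fin k, Accessible G d f j → j ∉ Tf → j ≠ Um → ¬ Movable G d f v j) ∧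
      (d + 1) * ((Aset G d f).card - 1 - Tf.card) ≤
        (Finset.univ.filter (fun u =>
          G.Adj v u ∧ Accessible G d f (f u) ∧ f u ∉ Tf ∧ f u ≠ Um)).card := by
  subst hDl hCm
  intro i hi v hv
  have hnonmov : ∀ j, Accessible G d f j → j ∉ Tf → j ≠ Um → ¬ Movable G d f v j :=
    fun j hj hjT hjU => not_movable_of_mem_TSet hdec hq (hTf ▸ hi) hv hj (hTf ▸ hjT) hjU
  refine ⟨hnonmov, ?_⟩
  have hUA : Um ∈ Aset G d f := mem_filter.2 ⟨mem_univ _, hdec.accessible_of_mem hUm.1⟩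
  have hTA : Tf ⊆ (Aset G d f).erase Um := fun W hW => by
    obtain ⟨hWU, hWD⟩ := mem_erase.1 (TSet_subset_erase _ _ _ (hTf ▸ hW))
    exact mem_erase.2 ⟨hWU, mem_filter.2 ⟨mem_univ _, hdec.accessible_of_mem hWD⟩⟩
  set S := (Aset G d f).erase Um \ Tf with hS
  have hcard : S.card = (Aset G d f).card - 1 - Tf.card := by
    rw [card_sdiff_of_subset hTA, card_erase_of_mem hUA]
  have hbound := mul_card_le_card_adj_of_le f v S (d + 1) fun j hj => by
    obtain ⟨hjA, hjT⟩ := mem_sdiff.1 hj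
    obtain ⟨hjU, hjA⟩ := mem_erase.1 hjA
    exact le_card_adj_of_not_movable hf (fun h => hjT (h ▸ hv ▸ hi))
      (hnonmov j (mem_filter.1 hjA).2 hjT hjU)
  rw [← hcard]
  convert hbound using 3 with u
  simp [hS, Aset, and_assoc, and_comm]
end
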